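/- arXiv:1707.08389 — 4 statements merged into one kernel-verified Lean document; each statement's English description precedes it below -/
import Mathlib

section
/- Two positive braid words are equal in B_3 if and only if one can be obtained from the other by successively applying the relation σ₁σ₂σ₁ = σ₂σ₁σ₂ (i.e., by replacing occurrences of the factor σ₁σ₂σ₁ with σ₂σ₁σ₂ and vice versa). -/
/-- The single braid relation of `B₃`: `σ₁σ₂σ₁ = σ₂σ₁σ₂`. -/
def braidRel : Set (FreeGroup (Fin 2)) :=
  {FreeGroup.of 0 * FreeGroup.of 1 * FreeGroup.of 0 *
    (FreeGroup.of 1 * FreeGroup.of 0 * FreeGroup.of 1)⁻¹}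

/-- The braid group `B₃ = ⟨σ₁, σ₂ ∣ σ₁σ₂σ₁ = σ₂σ₁σ₂⟩`. -/
abbrev B3 : Type := PresentedGroup braidRel

/-- The Artin generators `σ₁ = σ 0`, `σ₂ = σ 1` of `B₃`. -/
def σ (i : Fin 2) : B3 := PresentedGroup.of i

/-- The Garside element `Δ = σ₁σ₂σ₁` of `B₃`. -/
def Δ : B3 := σ 0 * σ 1 * σ 0

/-- The image in `B₃` of a positive braid word (a word over `{σ₁, σ₂}`). -/
def posBraid (w : List (Fin 2)) : B3 := (w.map σ).prod

/-- One rewriting step using the braid relation: replace a factor `σ₁σ₂σ₁`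
by `σ₂σ₁σ₂` or vice versa. -/
def braidStep (w w' : List (Fin 2)) : Prop :=
  ∃ u v : List (Fin 2),
    (w = u ++ [0, 1, 0] ++ v ∧ w' = u ++ [1, 0, 1] ++ v) ∨
    (w = u ++ [1, 0, 1] ++ v ∧ w' = u ++ [0, 1, 0] ++ v)

/-!
Equal words have equal images, so the content is that the positive braid monoid
`B₃⁺ = FreeMonoid (Fin 2) ⧸ braidCon` embeds in `B₃`. Two facts make this work. First, `B₃⁺` is
left cancellative, by induction on length and along a chain of braid moves: if `x :: u` and
`y :: v` are equivalent, then either `x = y` and `u`, `v` are equivalent, or `x ≠ y` and the tails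
are equivalent to `yx…` and `xy…` with a common continuation, because the only move that changes
the first letter is `xyx ↦ yxy`. Second, `Δ² = (σ₁σ₂σ₁)²` is central in `B₃⁺` and each generator
divides it on both sides. Hence the Ore localization of `B₃⁺` at its centre is a monoid into which
`B₃⁺` embeds and in which the generators become units, and `B₃` maps to its group of units
compatibly with positive words.
-/

instance OreLocalization.oreSetCenter {R : Type*} [Monoid R] :
    OreLocalization.OreSet (Submonoid.center R) where
  ore_right_cancel r₁ r₂ s h := ⟨s, by
    rwa [← Submonoid.mem_center_iff.1 s.2 r₁, ← Submonoid.mem_center_iff.1 s.2 r₂]⟩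
  oreNum r _ := r
  oreDenom _ s := s
  ore_eq r s := (Submonoid.mem_center_iff.1 s.2 r).symm

theorem OreLocalization.numeratorHom_injective {R : Type*} [Monoid R] [IsLeftCancelMul R]
    {S : Submonoid R} [OreLocalization.OreSet S] :
    Function.Injective (OreLocalization.numeratorHom : R →* OreLocalization S R) := by
  intro a b hab
  obtain ⟨u, v, hba, huv⟩ := OreLocalization.oreDiv_eq_iff.1 hab
  simp only [OneMemClass.coe_one, mul_one] at huv
  rw [Submonoid.smul_def, huv] at hba
  exact (mul_left_cancel hba).symm

theorem isUnit_of_isUnit_mul_of_isUnit_mul {M : Type*} [Monoid M] {a x b : M}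
    (hl : IsUnit (a * x)) (hr : IsUnit (x * b)) : IsUnit x := by
  obtain ⟨u, hu⟩ := hl
  obtain ⟨v, hv⟩ := hr
  refine isUnit_iff_exists_and_exists.2 ⟨⟨b * ↑v⁻¹, ?_⟩, ⟨↑u⁻¹ * a, ?_⟩⟩
  · rw [← mul_assoc, ← hv, Units.mul_inv]
  · rw [mul_assoc, ← hu, Units.inv_mul]

section BraidRelation

variable {M : Type*} [Monoid M] {a b : M}

theorem commute_mul_mul_sq_of_braid (h : a * b * a = b * a * b) : Commute ((a * b * a) ^ 2) a := by
  have hΔa : a * b * a * a = b * (a * b * a) := by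
    conv_lhs => rw [h]
    simp only [mul_assoc]
  have hΔb : a * b * a * b = a * (a * b * a) := by
    conv_rhs => rw [h]
    simp only [mul_assoc]
  calc (a * b * a) ^ 2 * a = a * b * a * (a * b * a * a) := by rw [sq, mul_assoc]
    _ = a * b * a * b * (a * b * a) := by rw [hΔa, ← mul_assoc]
    _ = a * (a * b * a) ^ 2 := by rw [hΔb, sq, mul_assoc]

theorem isUnit_of_isUnit_mul_mul_sq (hΔ : IsUnit ((a * b * a) ^ 2)) : IsUnit a :=
  isUnit_of_isUnit_mul_of_isUnit_mul (a := a * b * a * a * b) (b := b * a * a * b * a)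
    (by simpa only [sq, mul_assoc] using hΔ) (by simpa only [sq, mul_assoc] using hΔ)

end BraidRelation

namespace braidStep

local notation:50 u:51 " ≈ᵦ " v:51 => Relation.ReflTransGen braidStep u v

theorem iff_exists_ne {w w' : List (Fin 2)} : braidStep w w' ↔
    ∃ (p q : Fin 2) (u v : List (Fin 2)), p ≠ q ∧
      w = u ++ [p, q, p] ++ v ∧ w' = u ++ [q, p, q] ++ v := by
  constructor
  · rintro ⟨u, v, ⟨rfl, rfl⟩ | ⟨rfl, rfl⟩⟩
    exacts [⟨0, 1, u, v, by decide, rfl, rfl⟩, ⟨1, 0, u, v, by decide, rfl, rfl⟩]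
  · rintro ⟨p, q, u, v, hpq, rfl, rfl⟩
    fin_cases p <;> fin_cases q <;> first | exact absurd rfl hpq | exact ⟨u, v, by simp⟩

instance : Std.Symm braidStep where
  symm _ _ h := by
    obtain ⟨p, q, u, v, hpq, rfl, rfl⟩ := iff_exists_ne.1 h
    exact iff_exists_ne.2 ⟨q, p, u, v, hpq.symm, rfl, rfl⟩

theorem append {w w' : List (Fin 2)} (h : braidStep w w') (a b : List (Fin 2)) :
    braidStep (a ++ w ++ b) (a ++ w' ++ b) := by
  obtain ⟨p, q, u, v, hpq, rfl, rfl⟩ := iff_exists_ne.1 h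
  exact iff_exists_ne.2 ⟨p, q, a ++ u, v ++ b, hpq, by simp, by simp⟩

theorem length_eq {w w' : List (Fin 2)} (h : braidStep w w') : w'.length = w.length := by
  obtain ⟨p, q, u, v, -, rfl, rfl⟩ := iff_exists_ne.1 h
  simp

theorem cons_cases {x : Fin 2} {u z : List (Fin 2)} (h : braidStep (x :: u) z) :
    (∃ u', braidStep u u' ∧ z = x :: u') ∨
      ∃ y v, y ≠ x ∧ u = y :: x :: v ∧ z = y :: x :: y :: v := by
  obtain ⟨p, q, _ | ⟨a, t⟩, v, hpq, hw, rfl⟩ := iff_exists_ne.1 h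
  · simp only [List.nil_append, List.cons_append, List.cons.injEq] at hw
    obtain ⟨rfl, rfl⟩ := hw
    exact .inr ⟨q, v, hpq.symm, by simp, rfl⟩
  · simp only [List.cons_append, List.cons.injEq] at hw
    obtain ⟨rfl, rfl⟩ := hw
    exact .inl ⟨_, iff_exists_ne.2 ⟨p, q, t, v, hpq, rfl, rfl⟩, by simp⟩

theorem reflTransGen_append {u u' v v' : List (Fin 2)} (hu : u ≈ᵦ u') (hv : v ≈ᵦ v') :
    u ++ v ≈ᵦ u' ++ v' :=
  have hu' := Relation.ReflTransGen.lift (· ++ v)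
    (fun _ _ h => by simpa using h.append [] v) _ _ hu
  have hv' := Relation.ReflTransGen.lift (u' ++ ·)
    (fun _ _ h => by simpa using h.append u' []) _ _ hv
  hu'.trans hv'

theorem reflTransGen_cons (x : Fin 2) {u v : List (Fin 2)} (h : u ≈ᵦ v) : x :: u ≈ᵦ x :: v :=
  reflTransGen_append (u := [x]) .refl h

theorem tails_of_cons_reflTransGen_cons {n : ℕ}
    (hcancel : ∀ x u v, u.length < n → x :: u ≈ᵦ x :: v → u ≈ᵦ v)
    {x y : Fin 2} {u v : List (Fin 2)} (hu : u.length = n) (h : x :: u ≈ᵦ y :: v) :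
    (x = y → u ≈ᵦ v) ∧ (x ≠ y → ∃ w, u ≈ᵦ y :: x :: w ∧ v ≈ᵦ x :: y :: w) := by
  generalize hxu : x :: u = xu at h
  induction h using Relation.ReflTransGen.head_induction_on generalizing x u with
  | refl =>
    obtain ⟨rfl, rfl⟩ := List.cons.inj hxu
    exact ⟨fun _ => .refl, fun hxx => absurd rfl hxx⟩
  | head hstep _ ih =>
    subst hxu
    obtain ⟨u', hu', rfl⟩ | ⟨q, v₀, hqx, rfl, rfl⟩ := cons_cases hstep
    · obtain ⟨ih_eq, ih_ne⟩ := ih (hu'.length_eq.trans hu) rfl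
      refine ⟨fun hxy => .head hu' (ih_eq hxy), fun hxy => ?_⟩
      obtain ⟨w, huw, hvw⟩ := ih_ne hxy
      exact ⟨w, .head hu' huw, hvw⟩
    · obtain ⟨ih_eq, ih_ne⟩ := ih (u := x :: q :: v₀) (by simpa using hu) rfl
      by_cases hqy : q = y
      · subst hqy
        exact ⟨fun hxq => absurd hxq.symm hqx,
          fun _ => ⟨v₀, .refl, Std.Symm.symm _ _ (ih_eq rfl)⟩⟩
      · have hyx : y = x := by omega
        subst hyx
        obtain ⟨w, hw, hvw⟩ := ih_ne hqy
        have hqv₀ : q :: v₀ ≈ᵦ q :: w :=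
          hcancel _ _ _ (by simp only [List.length_cons] at hu ⊢; omega) hw
        have hv₀ : v₀ ≈ᵦ w := hcancel _ _ _ (by simp only [List.length_cons] at hu ⊢; omega) hqv₀
        refine ⟨fun _ => ?_, fun hyy => absurd rfl hyy⟩
        exact (reflTransGen_cons q (reflTransGen_cons y hv₀)).trans (Std.Symm.symm _ _ hvw)

theorem cancel_cons {x : Fin 2} {u v : List (Fin 2)} (h : x :: u ≈ᵦ x :: v) : u ≈ᵦ v := by
  induction hn : u.length using Nat.strong_induction_on generalizing x u v with
  | _ n ih =>
    exact (tails_of_cons_reflTransGen_cons (fun _ _ _ hlt h' => ih _ hlt h' rfl) hn h).1 rfl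

theorem cancel_left {m u v : List (Fin 2)} (h : m ++ u ≈ᵦ m ++ v) : u ≈ᵦ v := by
  induction m with
  | nil => exact h
  | cons x m ih => exact ih (cancel_cons h)

end braidStep

def braidCon : Con (FreeMonoid (Fin 2)) where
  r u v := Relation.ReflTransGen braidStep u.toList v.toList
  iseqv := ⟨fun _ => .refl, fun h => Std.Symm.symm _ _ h, .trans⟩
  mul' hu hv := by simpa only [FreeMonoid.toList_mul] using braidStep.reflTransGen_append hu hv

theorem braidCon_iff {u v : FreeMonoid (Fin 2)} :
    braidCon u v ↔ Relation.ReflTransGen braidStep u.toList v.toList :=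
  Iff.rfl

abbrev PosBraidMonoid : Type := braidCon.Quotient

namespace PosBraidMonoid

def of (i : Fin 2) : PosBraidMonoid := (FreeMonoid.of i : FreeMonoid (Fin 2))

theorem coe_ofList (w : List (Fin 2)) :
    ((FreeMonoid.ofList w : FreeMonoid (Fin 2)) : PosBraidMonoid) = (w.map of).prod := by
  induction w with
  | nil => rfl
  | cons i w ih => rw [FreeMonoid.ofList_cons, Con.coe_mul, ih]; rfl

theorem of_braid : of 0 * of 1 * of 0 = of 1 * of 0 * of 1 :=
  braidCon.eq.2 (.single ⟨[], [], .inl ⟨rfl, rfl⟩⟩)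

instance : IsLeftCancelMul PosBraidMonoid where
  mul_left_cancel a b c := by
    induction a using Con.induction_on
    induction b using Con.induction_on
    induction c using Con.induction_on
    simp only [← Con.coe_mul, Con.eq, braidCon_iff, FreeMonoid.toList_mul]
    exact braidStep.cancel_left

theorem delta_sq_mem_center : (of 0 * of 1 * of 0) ^ 2 ∈ Submonoid.center PosBraidMonoid := by
  have hgen : ∀ i, Commute (of i) ((of 0 * of 1 * of 0) ^ 2) := by
    intro i
    fin_cases i
    · exact (commute_mul_mul_sq_of_braid of_braid).symm
    · have h := (commute_mul_mul_sq_of_braid of_braid.symm).symm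
      rw [← of_braid] at h
      exact h
  refine Submonoid.mem_center_iff.2 fun g => ?_
  induction g using Con.induction_on with | H w =>
  induction w using FreeMonoid.inductionOn' with
  | one => exact (Commute.one_left _).eq
  | of_mul i w ih => rw [Con.coe_mul]; exact ((hgen i).mul_left ih).eq

abbrev Frac : Type := OreLocalization (Submonoid.center PosBraidMonoid) PosBraidMonoid

abbrev toFrac : PosBraidMonoid →* Frac := OreLocalization.numeratorHom

theorem isUnit_toFrac_of (i : Fin 2) : IsUnit (toFrac (of i)) := by
  have hΔ : IsUnit (toFrac ((of 0 * of 1 * of 0) ^ 2)) :=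
    OreLocalization.numerator_isUnit ⟨_, delta_sq_mem_center⟩
  have hbraid := congrArg toFrac of_braid
  simp only [map_pow, map_mul] at hΔ hbraid
  fin_cases i
  · exact isUnit_of_isUnit_mul_mul_sq hΔ
  · exact isUnit_of_isUnit_mul_mul_sq (hbraid ▸ hΔ)

noncomputable def toFracUnits : B3 →* Fracˣ :=
  PresentedGroup.toGroup (f := fun i => (isUnit_toFrac_of i).unit) <| by
    rintro r rfl
    simp only [map_mul, map_inv, FreeGroup.lift_apply_of, mul_inv_eq_one]
    ext
    simpa only [Units.val_mul, IsUnit.unit_spec, map_mul] using congrArg toFrac of_braid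

theorem val_toFracUnits_posBraid (w : List (Fin 2)) :
    (toFracUnits (posBraid w) : Frac) = toFrac (w.map of).prod := by
  induction w with
  | nil => simp only [posBraid, List.map_nil, List.prod_nil, map_one, Units.val_one]
  | cons i w ih =>
    rw [posBraid, List.map_cons, List.prod_cons, map_mul, Units.val_mul, ← posBraid, ih,
      List.map_cons, List.prod_cons, map_mul]
    simp [toFracUnits, σ]

end PosBraidMonoid

theorem σ_braid : σ 0 * σ 1 * σ 0 = σ 1 * σ 0 * σ 1 :=
  PresentedGroup.mk_eq_mk_of_mul_inv_mem rfl

theorem posBraid_append (u v : List (Fin 2)) : posBraid (u ++ v) = posBraid u * posBraid v := by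
  simp [posBraid]

theorem posBraid_eq_of_braidStep {w w' : List (Fin 2)} (h : braidStep w w') :
    posBraid w = posBraid w' := by
  have hΔ : posBraid [0, 1, 0] = posBraid [1, 0, 1] := by
    simpa [posBraid, mul_assoc] using σ_braid
  obtain ⟨u, v, ⟨rfl, rfl⟩ | ⟨rfl, rfl⟩⟩ := h <;> simp only [posBraid_append, hΔ]

/-- Two positive braid words are equal in `B₃` iff one can be obtained from the
other by successively applying the relation `σ₁σ₂σ₁ = σ₂σ₁σ₂`. -/
theorem positive_words_eq_iff (w w' : List (Fin 2)) :
    posBraid w = posBraid w' ↔ Relation.ReflTransGen braidStep w w' := by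
  constructor
  · intro h
    have h' := congrArg (fun g => (PosBraidMonoid.toFracUnits g : PosBraidMonoid.Frac)) h
    simp only [PosBraidMonoid.val_toFracUnits_posBraid, ← PosBraidMonoid.coe_ofList] at h'
    exact braidCon.eq.1 (OreLocalization.numeratorHom_injective h')
  · intro h
    induction h with
    | refl => rfl
    | tail _ hstep ih => exact ih.trans (posBraid_eq_of_braidStep hstep)
end

section
/- Every element of B_3 can be written uniquely as Δᵏ·β where k ∈ ℤ and β is (the image of) a positive braid word of which Δ is not a left divisor. -/
/-!
Conjugation by `Δ` swaps `σ₁` and `σ₂`, so conjugation by any `Δʲ` preserves the monoid of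
positive braids. Since `σᵢ⁻¹ = Δ⁻¹ σᵢ σᵢ'` (with `i'` the other index), the elements `Δᵏ x` with
`x` positive form a submonoid containing every `σᵢ^{±1}`, hence all of `B₃`. Splitting off a left
factor `Δ` lowers the exponent sum by 3, so repeatedly doing so terminates in a positive braid not
left divisible by `Δ`. Uniqueness: if `Δʲ x = Δᵏ y` with `j < k` and `y` positive, then
`x = Δ · Δᵏ⁻ʲ⁻¹ y` is left divisible by `Δ`.
-/

namespace B3

open Submonoid

theorem braid_relation : σ 0 * σ 1 * σ 0 = σ 1 * σ 0 * σ 1 := by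
  have h : PresentedGroup.mk braidRel (FreeGroup.of 0 * FreeGroup.of 1 * FreeGroup.of 0 *
      (FreeGroup.of 1 * FreeGroup.of 0 * FreeGroup.of 1)⁻¹) = 1 :=
    (QuotientGroup.eq_one_iff _).mpr (Subgroup.subset_normalClosure rfl)
  simp only [map_mul, map_inv, mul_inv_eq_one] at h
  exact h

theorem Δ_eq_σ_mul_σ_mul_σ (i : Fin 2) : Δ = σ i * σ i.rev * σ i := by
  fin_cases i
  · rfl
  · exact braid_relation

theorem Δ_mul_σ (i : Fin 2) : Δ * σ i = σ i.rev * Δ :=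
  calc Δ * σ i = σ i.rev * (σ i * σ i.rev * σ i) := by
        conv_lhs => rw [Δ_eq_σ_mul_σ_mul_σ i.rev, Fin.rev_rev]
        simp only [mul_assoc]
    _ = σ i.rev * Δ := by rw [← Δ_eq_σ_mul_σ_mul_σ]

theorem σ_mul_Δ (i : Fin 2) : σ i * Δ = Δ * σ i.rev := by
  rw [Δ_mul_σ, Fin.rev_rev]

theorem exists_zpow_Δ_mul_σ_mul_inv (j : ℤ) (i : Fin 2) :
    ∃ i', Δ ^ j * σ i * (Δ ^ j)⁻¹ = σ i' := by
  induction j using Int.induction_on with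
  | zero => exact ⟨i, by simp⟩
  | succ n ih =>
    obtain ⟨i', h⟩ := ih
    refine ⟨i'.rev, ?_⟩
    calc Δ ^ (n + 1 : ℤ) * σ i * (Δ ^ (n + 1 : ℤ))⁻¹
          = Δ * (Δ ^ (n : ℤ) * σ i * (Δ ^ (n : ℤ))⁻¹) * Δ⁻¹ := by group
      _ = σ i'.rev := by rw [h, Δ_mul_σ, mul_inv_cancel_right]
  | pred n ih =>
    obtain ⟨i', h⟩ := ih
    refine ⟨i'.rev, ?_⟩
    calc Δ ^ (-n - 1 : ℤ) * σ i * (Δ ^ (-n - 1 : ℤ))⁻¹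
          = Δ⁻¹ * (Δ ^ (-n : ℤ) * σ i * (Δ ^ (-n : ℤ))⁻¹) * Δ := by group
      _ = σ i'.rev := by rw [h, mul_assoc, σ_mul_Δ, inv_mul_cancel_left]

def positive : Submonoid B3 := closure (Set.range σ)

theorem σ_mem_positive (i : Fin 2) : σ i ∈ positive := subset_closure ⟨i, rfl⟩

theorem Δ_mem_positive : Δ ∈ positive :=
  mul_mem (mul_mem (σ_mem_positive 0) (σ_mem_positive 1)) (σ_mem_positive 0)

theorem mem_positive_iff {x : B3} : x ∈ positive ↔ ∃ w, x = posBraid w := by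
  rw [positive, ← FreeMonoid.mrange_lift, MonoidHom.mem_mrange]
  constructor
  · rintro ⟨y, rfl⟩
    exact ⟨y.toList, FreeMonoid.lift_apply σ y⟩
  · rintro ⟨w, rfl⟩
    exact ⟨FreeMonoid.ofList w, FreeMonoid.lift_apply σ _⟩

theorem exists_posBraid_iff {P : B3 → Prop} :
    (∃ w, P (posBraid w)) ↔ ∃ x ∈ positive, P x := by
  constructor
  · rintro ⟨w, h⟩
    exact ⟨_, mem_positive_iff.2 ⟨w, rfl⟩, h⟩
  · rintro ⟨x, hx, h⟩
    obtain ⟨w, rfl⟩ := mem_positive_iff.1 hx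
    exact ⟨w, h⟩

theorem conj_mem_positive {g x : B3} (hg : ∀ i, g * σ i * g⁻¹ ∈ positive)
    (hx : x ∈ positive) : g * x * g⁻¹ ∈ positive := by
  induction hx using closure_induction with
  | mem x hx =>
    obtain ⟨i, rfl⟩ := hx
    exact hg i
  | one =>
    rw [mul_one, mul_inv_cancel]
    exact one_mem _
  | mul x y _ _ hx hy =>
    have : g * (x * y) * g⁻¹ = g * x * g⁻¹ * (g * y * g⁻¹) := by group
    exact this ▸ mul_mem hx hy

theorem zpow_Δ_mul_mul_inv_mem_positive (j : ℤ) {x : B3} (hx : x ∈ positive) :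
    Δ ^ j * x * (Δ ^ j)⁻¹ ∈ positive := by
  refine conj_mem_positive (fun i => ?_) hx
  obtain ⟨i', h⟩ := exists_zpow_Δ_mul_σ_mul_inv j i
  exact h ▸ σ_mem_positive i'

def zpowΔMulPositive : Submonoid B3 where
  carrier := {g | ∃ k : ℤ, ∃ x ∈ positive, g = Δ ^ k * x}
  one_mem' := ⟨0, 1, one_mem _, by simp⟩
  mul_mem' := by
    rintro _ _ ⟨k, x, hx, rfl⟩ ⟨j, y, hy, rfl⟩
    refine ⟨k + j, Δ ^ (-j) * x * (Δ ^ (-j))⁻¹ * y,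
      mul_mem (zpow_Δ_mul_mul_inv_mem_positive _ hx) hy, by group⟩

theorem exists_eq_zpow_Δ_mul (g : B3) : ∃ k : ℤ, ∃ x ∈ positive, g = Δ ^ k * x := by
  have hle : (Subgroup.closure (Set.range σ)).toSubmonoid ≤ zpowΔMulPositive := by
    rw [Subgroup.closure_toSubmonoid, closure_le]
    rintro x (⟨i, rfl⟩ | ⟨i, hi⟩)
    · exact ⟨0, σ i, σ_mem_positive i, by simp⟩
    · refine ⟨-1, σ i * σ i.rev, mul_mem (σ_mem_positive i) (σ_mem_positive _), ?_⟩
      rw [← inv_inv x, ← hi, Δ_eq_σ_mul_σ_mul_σ i]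
      group
  exact hle (PresentedGroup.closure_range_of braidRel ▸ Subgroup.mem_top g)

def exponentSum : B3 →* Multiplicative ℤ :=
  PresentedGroup.toGroup (f := fun _ => Multiplicative.ofAdd 1) <| by
    rintro r rfl
    simp only [map_mul, map_inv, FreeGroup.lift_apply_of]
    group

theorem exponentSum_σ (i : Fin 2) : exponentSum (σ i) = Multiplicative.ofAdd 1 :=
  PresentedGroup.toGroup.of _

theorem toAdd_exponentSum_Δ_mul (x : B3) :
    (exponentSum (Δ * x)).toAdd = 3 + (exponentSum x).toAdd := by
  simp only [Δ, map_mul, exponentSum_σ, toAdd_mul, toAdd_ofAdd]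
  ring

theorem toAdd_exponentSum_nonneg {x : B3} (hx : x ∈ positive) : 0 ≤ (exponentSum x).toAdd := by
  induction hx using closure_induction with
  | mem x hx =>
    obtain ⟨i, rfl⟩ := hx
    simp [exponentSum_σ]
  | one => simp
  | mul x y _ _ hx hy =>
    rw [map_mul, toAdd_mul]
    exact add_nonneg hx hy

theorem exists_eq_pow_Δ_mul_not_dvd {x : B3} (hx : x ∈ positive) :
    ∃ n : ℕ, ∃ y ∈ positive, x = Δ ^ n * y ∧ ¬ ∃ z ∈ positive, y = Δ * z := by
  induction hlen : (exponentSum x).toAdd.toNat using Nat.strong_induction_on generalizing x with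
  | _ m ih =>
  by_cases hdvd : ∃ z ∈ positive, x = Δ * z
  · obtain ⟨z, hz, rfl⟩ := hdvd
    have hlt : (exponentSum z).toAdd.toNat < m := by
      have := toAdd_exponentSum_nonneg hz
      rw [← hlen, toAdd_exponentSum_Δ_mul]
      omega
    obtain ⟨n, y, hy, rfl, hyΔ⟩ := ih _ hlt hz rfl
    exact ⟨n + 1, y, hy, by rw [pow_succ', mul_assoc], hyΔ⟩
  · exact ⟨0, x, hx, by rw [pow_zero, one_mul], hdvd⟩

theorem Δ_dvd_of_zpow_Δ_mul_eq {j k : ℤ} {x y : B3} (hy : y ∈ positive) (hjk : j < k)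
    (h : Δ ^ j * x = Δ ^ k * y) : ∃ z ∈ positive, x = Δ * z := by
  obtain ⟨n, hn⟩ : ∃ n : ℕ, k - j = (n + 1 : ℕ) := ⟨(k - j - 1).toNat, by omega⟩
  refine ⟨Δ ^ n * y, mul_mem (pow_mem Δ_mem_positive n) hy, ?_⟩
  calc x = Δ ^ (k - j) * y := by rw [eq_inv_mul_of_mul_eq h]; group
    _ = Δ * (Δ ^ n * y) := by rw [hn, zpow_natCast, pow_succ', mul_assoc]

theorem eq_of_zpow_Δ_mul_eq {j k : ℤ} {x y : B3} (hx : x ∈ positive) (hy : y ∈ positive)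
    (hxΔ : ¬ ∃ z ∈ positive, x = Δ * z) (hyΔ : ¬ ∃ z ∈ positive, y = Δ * z)
    (h : Δ ^ j * x = Δ ^ k * y) : j = k ∧ x = y := by
  obtain rfl : j = k := by
    rcases lt_trichotomy j k with hjk | rfl | hkj
    · exact (hxΔ (Δ_dvd_of_zpow_Δ_mul_eq hy hjk h)).elim
    · rfl
    · exact (hyΔ (Δ_dvd_of_zpow_Δ_mul_eq hx hkj h.symm)).elim
  exact ⟨rfl, mul_left_cancel h⟩

end B3

open B3

/-- Garside normal form: every element of `B₃` can be written uniquely as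
`Δᵏ · β` with `k ∈ ℤ` and `β` a positive braid of which `Δ` is not a left
divisor (in the positive sense). -/
theorem garside_normal_form (g : B3) :
    ∃! p : ℤ × B3,
      g = Δ ^ p.1 * p.2 ∧ (∃ w : List (Fin 2), p.2 = posBraid w) ∧
        ¬ ∃ w' : List (Fin 2), p.2 = Δ * posBraid w' := by
  have hpos (y : B3) : (∃ w, y = posBraid w) ↔ y ∈ positive := mem_positive_iff.symm
  have hdvd (y : B3) : (∃ w, y = Δ * posBraid w) ↔ ∃ z ∈ positive, y = Δ * z :=
    exists_posBraid_iff (P := fun z => y = Δ * z)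
  simp only [hpos, hdvd]
  obtain ⟨k, x, hx, rfl⟩ := exists_eq_zpow_Δ_mul g
  obtain ⟨n, y, hy, rfl, hyΔ⟩ := exists_eq_pow_Δ_mul_not_dvd hx
  have hg : Δ ^ k * (Δ ^ n * y) = Δ ^ (k + n) * y := by rw [zpow_add, zpow_natCast, mul_assoc]
  refine ⟨(k + n, y), ⟨hg, hy, hyΔ⟩, ?_⟩
  rintro ⟨j, z⟩ ⟨h, hz, hzΔ⟩
  obtain ⟨rfl, rfl⟩ := eq_of_zpow_Δ_mul_eq hz hy hzΔ hyΔ (h.symm.trans hg)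
  rfl
end

section
/- The subgroup of B_3 generated by σ₁⁴ and σ₂⁴ is a free group of rank 2; equivalently, the map f sending the free group generators c, d to σ₁⁴ and σ₂⁴ respectively is an injective group homomorphism from FG({c,d}) into B_3. -/
/-!
Sending `σ₁ ↦ T = !![1, 1; 0, 1]` and `σ₂ ↦ S T S⁻¹ = !![1, 0; -1, 1]` respects the braid
relation, so it defines a representation `B₃ → SL(2, ℤ)` (the reduced Burau representation at
`t = -1`). It sends `σ₁⁴, σ₂⁴` to `!![1, 4; 0, 1]` and `!![1, 0; -4, 1]`, which generate a free
group by ping-pong on `ℤ²`: every nonzero power of the first maps `{|x| < |y|}` into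
`{|y| < |x|}`, since `|x + m y| ≥ |m| |y| - |x| > |y|` once `|m| ≥ 2`, and the second one is
conjugate to the first by `S`, which swaps the two regions. Hence already the composite
`FG({c,d}) → SL(2, ℤ)` is injective.
-/

open Pointwise Function ModularGroup MatrixGroups

/-- The classical two-set form of ping-pong; `FreeGroup.injective_lift_of_ping_pong` instead asks
for separate sets for the positive and the negative powers of each generator. -/
theorem FreeGroup.injective_lift_of_ping_pong_zpow {ι G α : Type*} [Nontrivial ι] [Group G]
    [MulAction G α] (a : ι → G) (X : ι → Set α) (hXnonempty : ∀ i, (X i).Nonempty)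
    (hXdisj : Pairwise (Disjoint on X))
    (hpp : Pairwise fun i j => ∀ n : ℤ, n ≠ 0 → a i ^ n • X j ⊆ X i) :
    Injective (FreeGroup.lift a) := by
  have hlift : FreeGroup.lift a =
      (Monoid.CoprodI.lift fun i => FreeGroup.lift fun _ : Unit => a i).comp
        freeGroupEquivCoprodI.toMonoidHom := by
    ext i
    simp
  rw [hlift, MonoidHom.coe_comp]
  refine Injective.comp ?_ freeGroupEquivCoprodI.injective
  obtain ⟨i₀⟩ := ‹Nontrivial ι›.to_nonempty
  refine Monoid.CoprodI.lift_injective_of_ping_pong _ (Or.inr ⟨i₀, ?_⟩) X hXnonempty hXdisj ?_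
  · rw [FreeGroup.freeGroupUnitEquivInt.cardinal_eq, Cardinal.mk_denumerable]
    exact Cardinal.natCast_le_aleph0
  · intro i j hij h hh
    obtain ⟨n, rfl⟩ : ∃ n : ℤ, FreeGroup.of () ^ n = h :=
      ⟨_, FreeGroup.freeGroupUnitEquivInt.symm_apply_apply h⟩
    simpa using hpp hij n (by rintro rfl; simp at hh)

theorem lt_abs_add_mul {R : Type*} [CommRing R] [LinearOrder R] [IsStrictOrderedRing R]
    {x y n : R} (hxy : |x| < |y|) (hn : 2 ≤ |n|) : |y| < |x + n * y| :=
  calc |y| < 2 * |y| - |x| := by linarith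
    _ ≤ |n * y| - |x| := by rw [abs_mul]; gcongr
    _ ≤ |x + n * y| := by simpa [add_comm] using abs_sub_abs_le_abs_add (n * y) x

section DominantCoord

variable {ι R : Type*}

def dominantCoord [Lattice R] [AddGroup R] (i : ι) : Set (ι → R) :=
  {v | ∀ j, j ≠ i → |v j| < |v i|}

lemma dominantCoord_nonempty [DecidableEq ι] [Ring R] [LinearOrder R] [IsStrictOrderedRing R]
    (i : ι) : (dominantCoord i : Set (ι → R)).Nonempty :=
  ⟨Pi.single i 1, fun j hj => by simp [hj]⟩

lemma pairwise_disjoint_dominantCoord [Lattice R] [AddGroup R] :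
    Pairwise (Disjoint on (dominantCoord : ι → Set (ι → R))) := by
  intro i j hij
  rw [onFun, Set.disjoint_left]
  exact fun v hi hj => lt_asymm (hi j hij.symm) (hj i hij)

end DominantCoord

lemma mem_dominantCoord_zero {v : Fin 2 → ℤ} : v ∈ dominantCoord 0 ↔ |v 1| < |v 0| := by
  simp [dominantCoord, Fin.forall_fin_two]

lemma mem_dominantCoord_one {v : Fin 2 → ℤ} : v ∈ dominantCoord 1 ↔ |v 0| < |v 1| := by
  simp [dominantCoord, Fin.forall_fin_two]

lemma T_zpow_smul (n : ℤ) (v : Fin 2 → ℤ) : T ^ n • v = ![v 0 + n * v 1, v 1] := by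
  change (↑(T ^ n) : Matrix (Fin 2) (Fin 2) ℤ).mulVec v = _
  rw [coe_T_zpow]
  ext i
  fin_cases i <;> simp [Matrix.mulVec, dotProduct]

lemma S_smul (v : Fin 2 → ℤ) : S • v = ![-v 1, v 0] := by
  change (↑S : Matrix (Fin 2) (Fin 2) ℤ).mulVec v = _
  rw [coe_S]
  ext i
  fin_cases i <;> simp [Matrix.mulVec, dotProduct]

lemma S_inv_smul (v : Fin 2 → ℤ) : S⁻¹ • v = ![v 1, -v 0] := by
  rw [inv_smul_eq_iff, S_smul]
  ext i
  fin_cases i <;> simp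

lemma T_zpow_smul_mem_dominantCoord {n : ℤ} (hn : 2 ≤ |n|) {v : Fin 2 → ℤ}
    (hv : v ∈ dominantCoord 1) : T ^ n • v ∈ dominantCoord 0 := by
  rw [mem_dominantCoord_one] at hv
  simpa [mem_dominantCoord_zero, T_zpow_smul] using lt_abs_add_mul hv hn

lemma S_smul_mem_dominantCoord {v : Fin 2 → ℤ} (hv : v ∈ dominantCoord 0) :
    S • v ∈ dominantCoord 1 := by
  simpa [mem_dominantCoord_zero, mem_dominantCoord_one, S_smul] using hv

lemma S_inv_smul_mem_dominantCoord {v : Fin 2 → ℤ} (hv : v ∈ dominantCoord 0) :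
    S⁻¹ • v ∈ dominantCoord 1 := by
  simpa [mem_dominantCoord_zero, mem_dominantCoord_one, S_inv_smul] using hv

def sl2Gen : Fin 2 → SL(2, ℤ) := ![T, S * T * S⁻¹]

theorem injective_lift_sl2Gen_zpow {k : ℤ} (hk : 2 ≤ |k|) :
    Injective (FreeGroup.lift fun i => sl2Gen i ^ k) := by
  refine FreeGroup.injective_lift_of_ping_pong_zpow _ (dominantCoord : Fin 2 → Set (Fin 2 → ℤ))
    dominantCoord_nonempty pairwise_disjoint_dominantCoord ?_
  have hkn {n : ℤ} (hn : n ≠ 0) : 2 ≤ |k * n| := by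
    rw [abs_mul]
    nlinarith [Int.one_le_abs hn]
  intro i j hij n hn
  rw [Set.smul_set_subset_iff]
  intro v hv
  fin_cases i <;> fin_cases j
  · exact absurd rfl hij
  · change (T ^ k) ^ n • v ∈ _
    rw [← zpow_mul]
    exact T_zpow_smul_mem_dominantCoord (hkn hn) hv
  · change ((S * T * S⁻¹) ^ k) ^ n • v ∈ _
    rw [← zpow_mul, conj_zpow, mul_smul, mul_smul]
    exact S_smul_mem_dominantCoord
      (T_zpow_smul_mem_dominantCoord (hkn hn) (S_inv_smul_mem_dominantCoord hv))
  · exact absurd rfl hij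

theorem sl2Gen_braid : sl2Gen 0 * sl2Gen 1 * sl2Gen 0 = sl2Gen 1 * sl2Gen 0 * sl2Gen 1 := by
  ext i j
  fin_cases i <;> fin_cases j <;> simp [sl2Gen, coe_T, coe_S, Matrix.adjugate_fin_two]

def toSL2Z : B3 →* SL(2, ℤ) :=
  PresentedGroup.toGroup (f := sl2Gen) <| by
    rintro _ rfl
    simp [sl2Gen_braid]

/-- The homomorphism `FG({c,d}) → B₃` with `f(c) = σ₁⁴` and `f(d) = σ₂⁴` is
injective; i.e. the subgroup of `B₃` generated by `σ₁⁴` and `σ₂⁴` is free of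
rank 2 (here `c = FreeGroup.of 0`, `d = FreeGroup.of 1`). -/
theorem f_injective :
    Function.Injective
      (FreeGroup.lift fun i : Fin 2 => if i = 0 then (σ 0) ^ 4 else (σ 1) ^ 4) := by
  have hcomp : toSL2Z.comp (FreeGroup.lift fun i : Fin 2 => if i = 0 then (σ 0) ^ 4 else (σ 1) ^ 4)
      = FreeGroup.lift fun i => sl2Gen i ^ (4 : ℤ) := by
    ext i
    fin_cases i <;> simp [toSL2Z, σ]
  refine Injective.of_comp (f := toSL2Z) ?_
  rw [← MonoidHom.coe_comp, hcomp]
  exact injective_lift_sl2Gen_zpow (by norm_num)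
end

section
/- For every n ≥ 3 there is a deterministic finite automaton P_n over a group alphabet Σ of size 2n, with n+2 states and 2n transitions, such that the unique word w accepted by P_n whose free-group reduction is the empty word has length exactly 2ⁿ. -/
/-!
With `a_i = (i, true)`, an accepted word is `a_{n-1} · u`, where `u` drives a counter from `0`
to `n`: at value `i` the letter `a_i⁻¹` increments it and, for `i < n - 1`, the letter `a_i`
resets it to `0`. The free reduction of a counter word from `i` starts with an index `≥ i` and
has every inverse letter followed by a larger index; so the two possible first letters `a_i`,
`a_i⁻¹` lead to different group elements, and `u ↦ r(u)` is injective on counter words. Hence at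
most one accepted word is trivial in the free group, and `a_{n-1} M_{n-1} a_{n-1}⁻¹` is one, where
`M_0 = ε` and `M_{k+1} = M_k a_k M_k a_k⁻¹` is trivial, of length `2^(k+1) - 2`.
-/

/-- Run a partial DFA with transition function `δ` from state `q` on word `w`. -/
def pdfaRun {Q A : Type*} (δ : Q → A → Option Q) (q : Q) (w : List A) : Option Q :=
  w.foldl (fun s a => s.bind fun p => δ p a) (some q)

/-- A word is accepted if running it from the initial state ends in a final state. -/
def pdfaAccepts {Q A : Type*} (δ : Q → A → Option Q) (q₀ : Q) (F : Finset Q)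
    (w : List A) : Prop := ∃ qf ∈ F, pdfaRun δ q₀ w = some qf

section PartialDFA

variable {Q A : Type*}

theorem pdfaRun_cons (δ : Q → A → Option Q) (q : Q) (a : A) (w : List A) :
    pdfaRun δ q (a :: w) = (δ q a).bind fun q' => pdfaRun δ q' w := by
  have foldl_none : ∀ w : List A, w.foldl (fun s a => s.bind fun p => δ p a) none = none := by
    intro w
    induction w with
    | nil => rfl
    | cons a w ih => exact ih
  cases h : δ q a <;> simp [pdfaRun, h, foldl_none]

def edgeDFA [DecidableEq Q] (src tgt : A → Q) (q : Q) (a : A) : Option Q :=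
  if q = src a then some (tgt a) else none

variable [DecidableEq Q] (src tgt : A → Q)

theorem pdfaRun_edgeDFA_cons (q : Q) (a : A) (w : List A) :
    pdfaRun (edgeDFA src tgt) q (a :: w) =
      if q = src a then pdfaRun (edgeDFA src tgt) (tgt a) w else none := by
  rw [pdfaRun_cons, edgeDFA]
  split_ifs <;> rfl

theorem card_edgeDFA_transitions [Fintype Q] [Fintype A] :
    (Finset.univ.filter fun p : Q × A => (edgeDFA src tgt p.1 p.2).isSome).card =
      Fintype.card A := by
  have : (Finset.univ.filter fun p : Q × A => (edgeDFA src tgt p.1 p.2).isSome) =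
      Finset.univ.map ⟨fun a => (src a, a), fun a b h => congrArg Prod.snd h⟩ := by
    ext ⟨q, a⟩
    rw [Finset.mem_map]
    constructor
    · intro hq
      by_cases h : q = src a
      · exact ⟨a, Finset.mem_univ _, by rw [h]; rfl⟩
      · simp [edgeDFA, h] at hq
    · rintro ⟨b, -, ⟨⟩⟩
      simp [edgeDFA]
  rw [this, Finset.card_map, Finset.card_univ]

end PartialDFA

namespace FreeGroup

variable {α : Type*}

theorem mk_cons (x : α × Bool) (L : List (α × Bool)) : mk (x :: L) = mk [x] * mk L := by
  rw [mul_mk]; rfl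

theorem mk_cons_inj (x : α × Bool) {s t : List (α × Bool)} :
    mk (x :: s) = mk (x :: t) ↔ mk s = mk t := by
  rw [mk_cons x s, mk_cons x t, mul_right_inj]

theorem mk_conj (k : α) (L : List (α × Bool)) :
    mk ((k, true) :: (L ++ [(k, false)])) = of k * mk L * (of k)⁻¹ := by
  rw [of, inv_mk, mul_mk, mul_mk]
  rfl

theorem mk_map_eq_one_iff {β : Type*} {f : α → β} (hf : Function.Injective f)
    (w : List (α × Bool)) : mk (w.map fun x => (f x.1, x.2)) = 1 ↔ mk w = 1 := by
  rw [← map.mk, map_eq_one_iff _ (map_injective hf)]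

variable [DecidableEq α]

theorem reduce_cons_eq_or (x : α × Bool) (L : List (α × Bool)) :
    reduce (x :: L) = x :: reduce L ∨ reduce L = (x.1, !x.2) :: reduce (x :: L) := by
  rw [reduce.cons]
  rcases h : reduce L with _ | ⟨y, t⟩
  · exact Or.inl rfl
  · dsimp only
    split_ifs with hxy
    · obtain ⟨x1, x2⟩ := x
      obtain ⟨y1, y2⟩ := y
      obtain ⟨rfl, rfl⟩ : x1 = y1 ∧ x2 = !y2 := hxy
      simp
    · exact Or.inl rfl

end FreeGroup

open FreeGroup

inductive Climbs (m : ℕ) : ℕ → List (ℕ × Bool) → Prop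
  | nil : Climbs m (m + 1) []
  | reset {i u} : i < m → Climbs m 0 u → Climbs m i ((i, true) :: u)
  | step {i u} : i ≤ m → Climbs m (i + 1) u → Climbs m i ((i, false) :: u)

namespace Climbs

variable {m : ℕ}

theorem nil_iff {i : ℕ} : Climbs m i [] ↔ i = m + 1 := by
  refine ⟨fun h => ?_, fun h => h ▸ nil⟩
  cases h
  rfl

theorem cons_iff {i k : ℕ} {b : Bool} {u : List (ℕ × Bool)} :
    Climbs m i ((k, b) :: u) ↔
      k = i ∧ if b then i < m ∧ Climbs m 0 u else i ≤ m ∧ Climbs m (i + 1) u := by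
  constructor
  · rintro (_ | ⟨hi, hu⟩ | ⟨hi, hu⟩)
    · exact ⟨rfl, hi, hu⟩
    · exact ⟨rfl, hi, hu⟩
  · cases b
    · rintro ⟨rfl, hi, hu⟩
      exact step hi hu
    · rintro ⟨rfl, hi, hu⟩
      exact reset hi hu

theorem fst_le {i : ℕ} {u : List (ℕ × Bool)} (h : Climbs m i u) : ∀ x ∈ u, x.1 ≤ m := by
  induction h with
  | nil => simp
  | reset hi _ ih => exact List.forall_mem_cons.2 ⟨hi.le, ih⟩
  | step hi _ ih => exact List.forall_mem_cons.2 ⟨hi, ih⟩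

end Climbs

def ClimbShape (i : ℕ) (τ : List (ℕ × Bool)) : Prop :=
  (∀ x ∈ τ.head?, i ≤ x.1) ∧ τ.IsChain fun x y => x.2 = false → x.1 < y.1

theorem reduce_cons_false_of_climbShape {i : ℕ} {L : List (ℕ × Bool)}
    (h : ClimbShape (i + 1) (reduce L)) : reduce ((i, false) :: L) = (i, false) :: reduce L := by
  rcases reduce_cons_eq_or (i, false) L with hL | hL
  · exact hL
  · exact absurd (h.1 (i, true) (by rw [hL]; rfl)) (by simp)

theorem climbShape_reduce_cons_false {i : ℕ} {L : List (ℕ × Bool)}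
    (h : ClimbShape (i + 1) (reduce L)) : ClimbShape i (reduce ((i, false) :: L)) := by
  rw [reduce_cons_false_of_climbShape h]
  refine ⟨by simp, List.isChain_cons.2 ⟨fun y hy _ => h.1 y hy, h.2⟩⟩

theorem climbShape_reduce_cons_true {i : ℕ} {L : List (ℕ × Bool)}
    (h : ClimbShape 0 (reduce L)) : ClimbShape i (reduce ((i, true) :: L)) := by
  rcases reduce_cons_eq_or (i, true) L with hL | hL
  · rw [hL]
    exact ⟨by simp, List.isChain_cons.2 ⟨by simp, h.2⟩⟩
  · rw [hL] at h
    obtain ⟨hfirst, hchain⟩ := List.isChain_cons.1 h.2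
    exact ⟨fun y hy => (hfirst y hy rfl).le, hchain⟩

theorem Climbs.climbShape_reduce {m i : ℕ} {u : List (ℕ × Bool)} (h : Climbs m i u) :
    ClimbShape i (reduce u) := by
  induction h with
  | nil => exact ⟨by simp, List.isChain_nil⟩
  | reset _ _ ih => exact climbShape_reduce_cons_true ih
  | step _ _ ih => exact climbShape_reduce_cons_false ih

theorem mk_cons_true_ne_mk_cons_false {i : ℕ} {s t : List (ℕ × Bool)}
    (hs : ClimbShape 0 (reduce s)) (ht : ClimbShape (i + 1) (reduce t)) :
    mk ((i, true) :: s) ≠ mk ((i, false) :: t) := by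
  intro h
  replace h := congrArg toWord h
  rw [toWord_mk, toWord_mk, reduce_cons_false_of_climbShape ht] at h
  rcases reduce_cons_eq_or (i, true) s with hs' | hs'
  · simp [hs'] at h
  · -- then `reduce s` starts with `(i, false), (i, false)`
    rw [hs', h] at hs
    exact lt_irrefl i ((List.isChain_cons_cons.1 hs.2).1 rfl)

theorem Climbs.eq_of_mk_eq {m i : ℕ} {u v : List (ℕ × Bool)} (hu : Climbs m i u)
    (hv : Climbs m i v) (h : mk u = mk v) : u = v := by
  induction hu generalizing v with
  | nil => cases hv <;> first | rfl | omega
  | reset hi hs ih =>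
    cases hv with
    | nil => omega
    | reset _ ht => rw [ih ht ((mk_cons_inj _).1 h)]
    | step _ ht =>
      exact absurd h (mk_cons_true_ne_mk_cons_false hs.climbShape_reduce ht.climbShape_reduce)
  | step hi hs ih =>
    cases hv with
    | nil => omega
    | reset _ ht =>
      exact absurd h.symm (mk_cons_true_ne_mk_cons_false ht.climbShape_reduce hs.climbShape_reduce)
    | step _ ht => rw [ih ht ((mk_cons_inj _).1 h)]

def counterWord : ℕ → List (ℕ × Bool)
  | 0 => []
  | k + 1 => counterWord k ++ (k, true) :: (counterWord k ++ [(k, false)])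

theorem mk_counterWord (k : ℕ) : mk (counterWord k) = 1 := by
  induction k with
  | zero => rfl
  | succ k ih => rw [counterWord, ← mul_mk, mk_conj, ih]; group

theorem length_counterWord (k : ℕ) : (counterWord k).length + 2 = 2 ^ (k + 1) := by
  induction k with
  | zero => rfl
  | succ k ih =>
    simp only [counterWord, List.length_append, List.length_cons, List.length_nil]
    rw [pow_succ]
    omega

theorem Climbs.counterWord_append {m k : ℕ} {v : List (ℕ × Bool)} (hk : k ≤ m)
    (h : Climbs m k v) : Climbs m 0 (counterWord k ++ v) := by
  induction k generalizing v with
  | zero => exact h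
  | succ k ih =>
    simp only [counterWord, List.append_assoc, List.cons_append]
    exact ih (by omega) (.reset (by omega) (ih (by omega) (.step (by omega) h)))

def counterTail (m : ℕ) : List (ℕ × Bool) := counterWord m ++ [(m, false)]

theorem climbs_counterTail (m : ℕ) : Climbs m 0 (counterTail m) :=
  Climbs.counterWord_append le_rfl (.step le_rfl .nil)

theorem mk_counterTail (m : ℕ) : mk ((m, true) :: counterTail m) = 1 := by
  rw [counterTail, mk_conj, mk_counterWord]; group

theorem length_counterTail (m : ℕ) : ((m, true) :: counterTail m).length = 2 ^ (m + 1) := by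
  simp only [counterTail, List.length_cons, List.length_append, List.length_nil]
  have := length_counterWord m
  omega

def valLetter {n : ℕ} (a : Fin n × Bool) : ℕ × Bool := (a.1, a.2)

theorem valLetter_injective (n : ℕ) : Function.Injective (@valLetter n) := by
  rintro ⟨a, b⟩ ⟨c, d⟩ h
  simp_all [valLetter, Fin.val_inj]

theorem mk_map_valLetter_eq_one_iff {n : ℕ} (w : List (Fin n × Bool)) :
    mk (w.map valLetter) = 1 ↔ mk w = 1 :=
  mk_map_eq_one_iff Fin.val_injective w

theorem exists_map_valLetter_eq {n : ℕ} :
    ∀ L : List (ℕ × Bool), (∀ x ∈ L, x.1 < n) → ∃ w : List (Fin n × Bool), w.map valLetter = L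
  | [], _ => ⟨[], rfl⟩
  | x :: L, h => by
    obtain ⟨w, hw⟩ := exists_map_valLetter_eq L fun y hy => h y (List.mem_cons_of_mem x hy)
    exact ⟨(⟨x.1, h x List.mem_cons_self⟩, x.2) :: w, by simp [valLetter, hw]⟩

/-- State `0` is initial and state `i + 1` stores the counter value `i` of `Climbs (n - 1)`; the
final state `n + 1` is the value `n` at which a climb stops. -/
def counterSrc (n : ℕ) (a : Fin n × Bool) : Fin (n + 2) :=
  if a.2 ∧ a.1.val + 1 = n then 0 else a.1.castSucc.succ

def counterTgt (n : ℕ) (a : Fin n × Bool) : Fin (n + 2) :=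
  if a.2 then 1 else a.1.succ.succ

theorem counterSrc_val (n : ℕ) (a : Fin n × Bool) :
    (counterSrc n a).val = if a.2 ∧ a.1.val + 1 = n then 0 else a.1.val + 1 := by
  unfold counterSrc
  split_ifs <;> simp

theorem counterTgt_val (n : ℕ) (a : Fin n × Bool) :
    (counterTgt n a).val = if a.2 then 1 else a.1.val + 2 := by
  unfold counterTgt
  split_ifs <;> simp

abbrev counterDFA (n : ℕ) : Fin (n + 2) → Fin n × Bool → Option (Fin (n + 2)) :=
  edgeDFA (counterSrc n) (counterTgt n)

theorem pdfaRun_counterDFA_eq_last_iff {m i : ℕ} (hi : i ≤ m + 1)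
    (w : List (Fin (m + 1) × Bool)) :
    pdfaRun (counterDFA (m + 1)) ⟨i + 1, by omega⟩ w = some (Fin.last (m + 2)) ↔
      Climbs m i (w.map valLetter) := by
  induction w generalizing i with
  | nil =>
    rw [List.map_nil, Climbs.nil_iff]
    simp [pdfaRun, Fin.ext_iff]
  | cons a w ih =>
    obtain ⟨k, b⟩ := a
    have hk : k.val ≤ m := Nat.le_of_lt_succ k.isLt
    rw [pdfaRun_edgeDFA_cons, List.map_cons, valLetter, Climbs.cons_iff]
    cases b
    · have hsrc :
          (⟨i + 1, by omega⟩ : Fin (m + 3)) = counterSrc (m + 1) (k, false) ↔ k.val = i := by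
        simp [Fin.ext_iff, counterSrc_val, eq_comm]
      have htgt : counterTgt (m + 1) (k, false) = ⟨k.val + 1 + 1, by omega⟩ := by
        simp [Fin.ext_iff, counterTgt_val]
      by_cases hki : k.val = i
      · subst hki
        rw [if_pos (hsrc.2 rfl), htgt, ih (by omega)]
        simp [hk]
      · rw [if_neg (mt hsrc.1 hki)]
        simp [hki]
    · have hsrc : (⟨i + 1, by omega⟩ : Fin (m + 3)) = counterSrc (m + 1) (k, true) ↔
          k.val = i ∧ i < m := by
        rw [Fin.ext_iff, counterSrc_val]
        by_cases hkm : k.val = m <;> simp [hkm] <;> omega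
      have htgt : counterTgt (m + 1) (k, true) = ⟨0 + 1, by omega⟩ := rfl
      by_cases hki : k.val = i ∧ i < m
      · rw [if_pos (hsrc.2 hki), htgt, ih (by omega)]
        simp [hki]
      · rw [if_neg (mt hsrc.1 hki)]
        simp only [reduceCtorEq, if_true, false_iff]
        tauto

theorem pdfaAccepts_counterDFA_iff {m : ℕ} (w : List (Fin (m + 1) × Bool)) :
    pdfaAccepts (counterDFA (m + 1)) 0 {Fin.last (m + 2)} w ↔
      ∃ u, w = (Fin.last m, true) :: u ∧ Climbs m 0 (u.map valLetter) := by
  simp only [pdfaAccepts, Finset.mem_singleton, exists_eq_left]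
  cases w with
  | nil => simp [pdfaRun, Fin.ext_iff]
  | cons a u =>
    rw [pdfaRun_edgeDFA_cons]
    have hsrc : (0 : Fin (m + 3)) = counterSrc (m + 1) a ↔ a = (Fin.last m, true) := by
      obtain ⟨k, b⟩ := a
      rw [Fin.ext_iff, counterSrc_val, Prod.ext_iff, Fin.ext_iff]
      cases b <;> simp
    by_cases ha : a = (Fin.last m, true)
    · subst ha
      rw [if_pos (hsrc.2 rfl)]
      exact (pdfaRun_counterDFA_eq_last_iff (i := 0) (by omega) u).trans (by simp)
    · rw [if_neg (mt hsrc.1 ha)]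
      simp [ha]

/-- For every `n ≥ 3` there is a DFA over a group alphabet of size `2n`
(letters `Fin n × Bool`), with `n + 2` states and `2n` transitions, such that the
unique accepted word whose free-group reduction is empty has length exactly `2ⁿ`. -/
theorem power_automaton (n : ℕ) (hn : 3 ≤ n) :
    ∃ (δ : Fin (n + 2) → Fin n × Bool → Option (Fin (n + 2)))
      (q₀ : Fin (n + 2)) (F : Finset (Fin (n + 2))) (w₀ : List (Fin n × Bool)),
      (Finset.univ.filter
        (fun p : Fin (n + 2) × (Fin n × Bool) => (δ p.1 p.2).isSome)).card = 2 * n ∧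
      w₀.length = 2 ^ n ∧
      ∀ w : List (Fin n × Bool),
        (pdfaAccepts δ q₀ F w ∧ FreeGroup.mk w = 1) ↔ w = w₀ := by
  obtain ⟨m, rfl⟩ : ∃ m, n = m + 1 := ⟨n - 1, by omega⟩
  obtain ⟨u₀, hu₀⟩ := exists_map_valLetter_eq (counterTail m)
    fun x hx => Nat.lt_succ_of_le ((climbs_counterTail m).fst_le x hx)
  refine ⟨counterDFA (m + 1), 0, {Fin.last (m + 2)}, (Fin.last m, true) :: u₀, ?_, ?_, fun w => ?_⟩
  · rw [card_edgeDFA_transitions, Fintype.card_prod, Fintype.card_fin, Fintype.card_bool, mul_comm]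
  · rw [← length_counterTail, List.length_cons, List.length_cons, ← hu₀, List.length_map]
  rw [pdfaAccepts_counterDFA_iff, ← mk_map_valLetter_eq_one_iff]
  constructor
  · rintro ⟨⟨u, rfl, hu⟩, h⟩
    change mk ((m, true) :: u.map valLetter) = 1 at h
    rw [← mk_counterTail m, mk_cons_inj, ← hu₀] at h
    rw [List.map_injective_iff.2 (valLetter_injective _)
      (hu.eq_of_mk_eq (hu₀ ▸ climbs_counterTail m) h)]
  · rintro rfl
    exact ⟨⟨u₀, rfl, hu₀ ▸ climbs_counterTail m⟩,
      by rw [List.map_cons, hu₀]; exact mk_counterTail m⟩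
end
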